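/- Let X be a T1 topological space and let f : 𝕊 → X be a continuous open surjection from the Sorgenfrey line onto X. If the weight of X is uncountable (X is not second countable), then there exists an uncountable set B ⊆ X such that for every x ∈ B the fiber f⁻¹(x) is a closed discrete subset of the Sorgenfrey line. -/

import Mathlib

open Set Filter Topology Function

/-- The Sorgenfrey line: the real line as a type synonym. -/
def SorgenfreyLine : Type := ℝ

notation "𝕊" => SorgenfreyLine

noncomputable instance : LinearOrder 𝕊 := inferInstanceAs (LinearOrder ℝ)
instance : RatCast 𝕊 := inferInstanceAs (RatCast ℝ)

/-- The topology on the Sorgenfrey line, generated by half-open intervals `[a, b)`, `a < b`. -/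
instance : TopologicalSpace 𝕊 :=
  TopologicalSpace.generateFrom {s : Set 𝕊 | ∃ a b : 𝕊, a < b ∧ s = Set.Ico a b}

/-!
Let `B` be the set of points of `X` whose fibre is discrete; all fibres are closed since `X` is T1.
If `B` were countable, then, for a section `g` of `f`, the images `f '' [g x, q)` with `x ∈ B`,
`q ∈ ℚ`, together with the images `f '' (q, r)` with `q, r ∈ ℚ`, would form a countable base of `X`.
Indeed, a point `a ∉ B` has a fibre with an accumulation point `p`, necessarily approached from the
right in `𝕊`, so every neighbourhood `[p, t)` of `p` contains a rational interval `(q, r)` meeting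
the fibre, and then `a ∈ f '' (q, r)`.
-/

namespace SorgenfreyLine

theorem exists_rat_btwn {a b : 𝕊} (h : a < b) : ∃ q : ℚ, a < q ∧ q < b :=
  _root_.exists_rat_btwn (K := ℝ) h

instance : NoMaxOrder 𝕊 := inferInstanceAs (NoMaxOrder ℝ)

theorem isTopologicalBasis_Ico :
    TopologicalSpace.IsTopologicalBasis {s : Set 𝕊 | ∃ a b, a < b ∧ s = Ico a b} where
  exists_subset_inter := by
    rintro _ ⟨a, b, -, rfl⟩ _ ⟨c, d, -, rfl⟩ x ⟨hx₁, hx₂⟩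
    exact ⟨Ico x (min b d), ⟨x, min b d, lt_min hx₁.2 hx₂.2, rfl⟩, ⟨le_rfl, lt_min hx₁.2 hx₂.2⟩,
      fun y hy => ⟨⟨hx₁.1.trans hy.1, hy.2.trans_le (min_le_left _ _)⟩,
        ⟨hx₂.1.trans hy.1, hy.2.trans_le (min_le_right _ _)⟩⟩⟩
  sUnion_eq := sUnion_eq_univ_iff.2 fun x =>
    let ⟨b, hb⟩ := exists_gt x
    ⟨Ico x b, ⟨x, b, hb, rfl⟩, le_rfl, hb⟩
  eq_generateFrom := rfl

theorem isOpen_Ico (a b : 𝕊) : IsOpen (Ico a b) := by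
  rcases lt_or_ge a b with hab | hab
  · exact isTopologicalBasis_Ico.isOpen ⟨a, b, hab, rfl⟩
  · simp [Ico_eq_empty hab.not_gt]

theorem nhds_basis_Ico (a : 𝕊) : (𝓝 a).HasBasis (a < ·) (Ico a ·) := by
  refine ⟨fun t => ⟨fun ht => ?_, fun ⟨b, hb, hsub⟩ => ?_⟩⟩
  · obtain ⟨_, ⟨c, d, -, rfl⟩, hac, hsub⟩ := isTopologicalBasis_Ico.mem_nhds_iff.1 ht
    exact ⟨d, hac.2, (Ico_subset_Ico_left hac.1).trans hsub⟩
  · exact mem_of_superset ((isOpen_Ico a b).mem_nhds ⟨le_rfl, hb⟩) hsub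

theorem isOpen_Ioo (a b : 𝕊) : IsOpen (Ioo a b) :=
  isOpen_iff_mem_nhds.2 fun x hx =>
    mem_of_superset ((isOpen_Ico x b).mem_nhds ⟨le_rfl, hx.2⟩) fun _ hy =>
      ⟨hx.1.trans_le hy.1, hy.2⟩

theorem exists_rat_Ico_subset {p : 𝕊} {t : Set 𝕊} (ht : t ∈ 𝓝 p) :
    ∃ q : ℚ, p < q ∧ Ico p q ⊆ t := by
  obtain ⟨b, hpb, hsub⟩ := (nhds_basis_Ico p).mem_iff.1 ht
  obtain ⟨q, hpq, hqb⟩ := exists_rat_btwn hpb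
  exact ⟨q, hpq, (Ico_subset_Ico_right hqb.le).trans hsub⟩

theorem exists_rat_Ioo_subset_of_accPt {p : 𝕊} {s t : Set 𝕊} (hp : AccPt p (𝓟 s))
    (ht : t ∈ 𝓝 p) : ∃ q r : ℚ, (Ioo (q : 𝕊) r ∩ s).Nonempty ∧ Ioo (q : 𝕊) r ⊆ t := by
  obtain ⟨b, hpb, hsub⟩ := (nhds_basis_Ico p).mem_iff.1 ht
  obtain ⟨y, ⟨⟨hpy, hyb⟩, hys⟩, hyp⟩ :=
    accPt_iff_nhds.1 hp _ ((isOpen_Ico p b).mem_nhds ⟨le_rfl, hpb⟩)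
  obtain ⟨q, hpq, hqy⟩ := exists_rat_btwn (hpy.lt_of_ne' hyp)
  obtain ⟨r, hyr, hrb⟩ := exists_rat_btwn hyb
  exact ⟨q, r, ⟨y, ⟨hqy, hyr⟩, hys⟩, fun z hz => hsub ⟨(hpq.trans hz.1).le, hz.2.trans hrb⟩⟩

end SorgenfreyLine

open SorgenfreyLine TopologicalSpace

theorem secondCountableTopology_of_countable_discrete_fibers {X : Type*} [TopologicalSpace X]
    {f : 𝕊 → X} (hf : Continuous f) (hopen : IsOpenMap f) (hsurj : Surjective f)
    (hB : {x | DiscreteTopology (f ⁻¹' {x})}.Countable) : SecondCountableTopology X := by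
  obtain ⟨g, hg⟩ := hsurj.hasRightInverse
  set B := {x | DiscreteTopology (f ⁻¹' {x})}
  set S : Set (Set X) := (⋃ x ∈ B, range fun q : ℚ => f '' Ico (g x) q) ∪
    range fun qr : ℚ × ℚ => f '' Ioo (qr.1 : 𝕊) qr.2
  have hS : S.Countable :=
    (hB.biUnion fun _ _ => countable_range _).union (countable_range _)
  refine (isTopologicalBasis_of_isOpen_of_nhds ?_ fun a u hau hu => ?_).secondCountableTopology hS
  · rintro _ (⟨_, ⟨x, rfl⟩, _, ⟨-, rfl⟩, q, rfl⟩ | ⟨qr, rfl⟩)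
    exacts [hopen _ (isOpen_Ico _ _), hopen _ (isOpen_Ioo _ _)]
  by_cases ha : a ∈ B
  · have : f ⁻¹' u ∈ 𝓝 (g a) := (hu.preimage hf).mem_nhds (by rwa [mem_preimage, hg a])
    obtain ⟨q, hq, hsub⟩ := exists_rat_Ico_subset this
    exact ⟨f '' Ico (g a) q, .inl (mem_biUnion ha ⟨q, rfl⟩), ⟨g a, ⟨le_rfl, hq⟩, hg a⟩,
      image_subset_iff.2 hsub⟩
  · obtain ⟨p, hp, hacc⟩ : ∃ p ∈ f ⁻¹' {a}, AccPt p (𝓟 (f ⁻¹' {a})) := by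
      by_contra! h
      exact ha (discreteTopology_of_noAccPts h)
    have : f ⁻¹' u ∈ 𝓝 p :=
      (hu.preimage hf).mem_nhds (by rwa [mem_preimage, mem_singleton_iff.1 hp])
    obtain ⟨q, r, ⟨y, hy, hya⟩, hsub⟩ := exists_rat_Ioo_subset_of_accPt hacc this
    exact ⟨f '' Ioo (q : 𝕊) r, .inr ⟨(q, r), rfl⟩, ⟨y, hy, hya⟩, image_subset_iff.2 hsub⟩

/-- If `f : 𝕊 → X` is a continuous open surjection onto a T1 space with uncountable weight
(i.e. `X` is not second countable), then there is an uncountable set `B ⊆ X` such that every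
fiber over a point of `B` is a closed discrete subset of the Sorgenfrey line. -/
theorem stmt1 {X : Type} [TopologicalSpace X] [T1Space X] (f : 𝕊 → X)
    (hf : Continuous f) (hopen : IsOpenMap f) (hsurj : Surjective f)
    (hw : ¬ SecondCountableTopology X) :
    ∃ B : Set X, ¬ B.Countable ∧
      ∀ x ∈ B, IsClosed (f ⁻¹' {x}) ∧ DiscreteTopology (f ⁻¹' {x} : Set 𝕊) :=
  ⟨{x | DiscreteTopology (f ⁻¹' {x})},
    fun hB => hw (secondCountableTopology_of_countable_discrete_fibers hf hopen hsurj hB),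
    fun _ hx => ⟨isClosed_singleton.preimage hf, hx⟩⟩
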